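/- arXiv:2004.11315 — 3 statements merged into one kernel-verified Lean document; each statement's English description precedes it below -/
import Mathlib

section
/- If x is a simplicial vertex of a finite simple graph G (i.e., the neighborhood of x is a clique), then the minimum fill-in of G equals the minimum fill-in of the elimination graph G_x obtained by deleting x (and adding the missing edges among its neighbors, of which there are none). Equivalently, eliminating x first extends to a minimum fill-in ordering of G. -/
open SimpleGraph

attribute [local instance] Classical.propDecidable

variable {V : Type*} [Fintype V] [DecidableEq V]

/-- The elimination graph `G_x`: delete `x` and complete its neighborhood to a clique.
(The eliminated vertex is kept as an isolated vertex.) -/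
def elimG (G : SimpleGraph V) (x : V) : SimpleGraph V where
  Adj u v := u ≠ v ∧ u ≠ x ∧ v ≠ x ∧ (G.Adj u v ∨ (G.Adj x u ∧ G.Adj x v))
  symm := by
    constructor
    intro u v h
    obtain ⟨h1, h2, h3, h4⟩ := h
    refine ⟨h1.symm, h3, h2, ?_⟩
    rcases h4 with h | ⟨h4, h5⟩
    · exact Or.inl h.symm
    · exact Or.inr ⟨h5, h4⟩
  loopless := by constructor; intro v h; exact h.1 rfl

/-- The deficiency `D(x)`: the set of unordered pairs of distinct, non-adjacent
neighbors of `x`. -/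
noncomputable def deficiencyFinset (G : SimpleGraph V) (x : V) : Finset (Sym2 V) :=
  ((Finset.univ ×ˢ Finset.univ : Finset (V × V)).filter
    (fun p => p.1 ≠ p.2 ∧ G.Adj x p.1 ∧ G.Adj x p.2 ∧ ¬ G.Adj p.1 p.2)).image
    (fun p => s(p.1, p.2))

/-- Successive elimination of a list of vertices. -/
def elimList : SimpleGraph V → List V → SimpleGraph V
  | G, [] => G
  | G, x :: xs => elimList (elimG G x) xs

/-- The fill-in of an elimination ordering given as a list: the total number of
edges added during the elimination process. -/
noncomputable def fillList : SimpleGraph V → List V → ℕ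
  | _, [] => 0
  | G, x :: xs => (deficiencyFinset G x).card + fillList (elimG G x) xs

/-- The set of fill edges added during the elimination process. -/
noncomputable def fillEdges : SimpleGraph V → List V → Finset (Sym2 V)
  | _, [] => ∅
  | G, x :: xs => deficiencyFinset G x ∪ fillEdges (elimG G x) xs

/-- A list is an (elimination) ordering if it enumerates every vertex exactly once. -/
def IsOrdering (L : List V) : Prop := L.Nodup ∧ ∀ v : V, v ∈ L

/-- The minimum fill-in `Φ(G)`. -/
noncomputable def minFillIn (G : SimpleGraph V) : ℕ :=
  sInf {n | ∃ L : List V, IsOrdering L ∧ fillList G L = n}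

/-- A vertex is simplicial if its neighborhood is a clique. -/
def IsSimplicial (G : SimpleGraph V) (x : V) : Prop :=
  ∀ a b, G.Adj x a → G.Adj x b → a ≠ b → G.Adj a b

/-- `a` and `b` are indistinguishable: equal closed neighborhoods. -/
def Indistinguishable (G : SimpleGraph V) (a b : V) : Prop :=
  a ≠ b ∧ insert a (G.neighborSet a) = insert b (G.neighborSet b)

/-- `a` and `b` are twins: equal open neighborhoods (hence non-adjacent). -/
def Twins (G : SimpleGraph V) (a b : V) : Prop :=
  a ≠ b ∧ G.neighborSet a = G.neighborSet b

/-- Chordality: no induced cycle of length at least 4, equivalently every cycle of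
length at least 4 has a chord. -/
def IsChordal (G : SimpleGraph V) : Prop :=
  ∀ n : ℕ, 4 ≤ n → ∀ f : ZMod n → V, Function.Injective f →
    ¬ (∀ i j : ZMod n, G.Adj (f i) (f j) ↔ (j = i + 1 ∨ i = j + 1))

/-- `T` is a triangulation of `G`: a set of non-edges whose addition makes `G` chordal. -/
def IsTriangulation (G : SimpleGraph V) (T : Finset (Sym2 V)) : Prop :=
  (∀ e ∈ T, ¬ e.IsDiag ∧ e ∉ G.edgeSet) ∧
    IsChordal (G ⊔ SimpleGraph.fromEdgeSet (↑T : Set (Sym2 V)))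

/-- A minimum triangulation. -/
def IsMinTriangulation (G : SimpleGraph V) (T : Finset (Sym2 V)) : Prop :=
  IsTriangulation G T ∧ ∀ T' : Finset (Sym2 V), IsTriangulation G T' → T.card ≤ T'.card

/-- The graph obtained from `G` by deleting the vertices in `S`
(deleted vertices are kept as isolated vertices). -/
def deleteSet (G : SimpleGraph V) (S : Set V) : SimpleGraph V where
  Adj u v := G.Adj u v ∧ u ∉ S ∧ v ∉ S
  symm := ⟨fun _ _ ⟨h, hu, hv⟩ => ⟨h.symm, hv, hu⟩⟩
  loopless := ⟨fun v h => G.irrefl h.1⟩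

/-! Eliminating a simplicial vertex `x` adds no edge and merely deletes `x`, and `x` stays
simplicial when any other vertex is eliminated, so eliminating `x` commutes with every
elimination step. Since deficiencies only shrink under deletion, every ordering has no more
fill-in in `G_x` than in `G`, whence `Φ(G_x) ≤ Φ(G)`. Conversely, `x` preceded by an optimal
ordering of `G_x`, from which the isolated vertex `x` can be dropped, has fill-in `Φ(G_x)` in
`G`. -/

omit [Fintype V] [DecidableEq V] in
lemma elimG_adj {G : SimpleGraph V} {x u v : V} :
    (elimG G x).Adj u v ↔ u ≠ v ∧ u ≠ x ∧ v ≠ x ∧ (G.Adj u v ∨ (G.Adj x u ∧ G.Adj x v)) :=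
  Iff.rfl

omit [Fintype V] [DecidableEq V] in
lemma deleteSet_adj {G : SimpleGraph V} {S : Set V} {u v : V} :
    (deleteSet G S).Adj u v ↔ G.Adj u v ∧ u ∉ S ∧ v ∉ S :=
  Iff.rfl

lemma mem_deficiencyFinset {G : SimpleGraph V} {x : V} {e : Sym2 V} :
    e ∈ deficiencyFinset G x ↔
      ∃ u v : V, (u ≠ v ∧ G.Adj x u ∧ G.Adj x v ∧ ¬ G.Adj u v) ∧ e = s(u, v) := by
  simp only [deficiencyFinset, Finset.mem_image, Finset.mem_filter, Finset.mem_product,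
    Finset.mem_univ, true_and, Prod.exists, eq_comm (a := e)]

lemma fillList_cons (G : SimpleGraph V) (y : V) (L : List V) :
    fillList G (y :: L) = (deficiencyFinset G y).card + fillList (elimG G y) L := rfl

lemma deficiencyFinset_eq_empty {G : SimpleGraph V} {x : V} (hx : IsSimplicial G x) :
    deficiencyFinset G x = ∅ := by
  ext e
  simp only [mem_deficiencyFinset, Finset.notMem_empty, iff_false]
  rintro ⟨u, v, ⟨huv, hu, hv, hnadj⟩, rfl⟩
  exact hnadj (hx u v hu hv huv)

omit [Fintype V] [DecidableEq V] in
lemma isSimplicial_of_isolated {G : SimpleGraph V} {x : V} (h : ∀ u, ¬ G.Adj x u) :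
    IsSimplicial G x := fun a _ ha _ _ => absurd ha (h a)

omit [Fintype V] [DecidableEq V] in
lemma IsSimplicial.elimG {G : SimpleGraph V} {x : V} (hx : IsSimplicial G x) (y : V) :
    IsSimplicial (elimG G y) x := by
  rintro a b ⟨hxa, -, hay, ha⟩ ⟨hxb, -, hby, hb⟩ hab
  refine ⟨hab, hay, hby, ?_⟩
  rcases ha with ha | ⟨hyx, hya⟩ <;> rcases hb with hb | ⟨hyx, hyb⟩
  · exact Or.inl (hx a b ha hb hab)
  · exact Or.inr ⟨(hx a y ha hyx.symm hay).symm, hyb⟩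
  · exact Or.inr ⟨hya, (hx b y hb hyx.symm hby).symm⟩
  · exact Or.inr ⟨hya, hyb⟩

omit [Fintype V] [DecidableEq V] in
lemma elimG_eq_deleteSet {G : SimpleGraph V} {x : V} (hx : IsSimplicial G x) :
    elimG G x = deleteSet G {x} := by
  ext u v
  simp only [elimG_adj, deleteSet_adj, Set.mem_singleton_iff]
  constructor
  · rintro ⟨huv, hux, hvx, h | ⟨hu, hv⟩⟩
    · exact ⟨h, hux, hvx⟩
    · exact ⟨hx u v hu hv huv, hux, hvx⟩
  · rintro ⟨h, hux, hvx⟩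
    exact ⟨h.ne, hux, hvx, Or.inl h⟩

omit [Fintype V] [DecidableEq V] in
lemma elimG_eq_self_of_isolated {G : SimpleGraph V} {x : V} (h : ∀ u, ¬ G.Adj x u) :
    elimG G x = G := by
  rw [elimG_eq_deleteSet (isSimplicial_of_isolated h)]
  ext u v
  simp only [deleteSet_adj, Set.mem_singleton_iff, and_iff_left_iff_imp]
  intro huv
  exact ⟨fun hux => h v (hux ▸ huv), fun hvx => h u (hvx ▸ huv.symm)⟩

omit [Fintype V] [DecidableEq V] in
lemma not_elimG_adj_self (G : SimpleGraph V) (x u : V) : ¬ (elimG G x).Adj x u :=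
  fun h => h.2.1 rfl

omit [Fintype V] [DecidableEq V] in
lemma elimG_deleteSet (G : SimpleGraph V) {S : Set V} {y : V} (hy : y ∉ S) :
    elimG (deleteSet G S) y = deleteSet (elimG G y) S := by
  ext u v
  simp only [elimG_adj, deleteSet_adj]
  tauto

omit [Fintype V] [DecidableEq V] in
lemma elimG_comm_of_isSimplicial {G : SimpleGraph V} {x : V} (hx : IsSimplicial G x) (y : V) :
    elimG (elimG G x) y = elimG (elimG G y) x := by
  obtain rfl | hyx := eq_or_ne y x
  · rfl
  rw [elimG_eq_deleteSet hx, elimG_deleteSet G (Set.notMem_singleton_iff.2 hyx),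
    elimG_eq_deleteSet (hx.elimG y)]

lemma deficiencyFinset_deleteSet_subset (G : SimpleGraph V) (S : Set V) (y : V) :
    deficiencyFinset (deleteSet G S) y ⊆ deficiencyFinset G y := by
  intro e he
  rw [mem_deficiencyFinset] at he ⊢
  obtain ⟨u, v, ⟨huv, hu, hv, hnadj⟩, rfl⟩ := he
  exact ⟨u, v, ⟨huv, hu.1, hv.1, fun h => hnadj ⟨h, hu.2.2, hv.2.2⟩⟩, rfl⟩

lemma fillList_elimG_le_of_isSimplicial :
    ∀ (G : SimpleGraph V) {x : V}, IsSimplicial G x →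
      ∀ L : List V, fillList (elimG G x) L ≤ fillList G L
  | _, _, _, [] => le_rfl
  | G, x, hx, y :: L => by
    rw [fillList_cons, fillList_cons, elimG_comm_of_isSimplicial hx, elimG_eq_deleteSet hx]
    exact Nat.add_le_add (Finset.card_le_card (deficiencyFinset_deleteSet_subset G {x} y))
      (elimG_eq_deleteSet (hx.elimG y) ▸ fillList_elimG_le_of_isSimplicial _ (hx.elimG y) L)

lemma fillList_erase_of_isolated {x : V} :
    ∀ (G : SimpleGraph V) (L : List V), (∀ u, ¬ G.Adj x u) → fillList G (L.erase x) = fillList G L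
  | _, [], _ => rfl
  | G, y :: L, h => by
    by_cases hyx : y = x
    · subst hyx
      rw [List.erase_cons_head, fillList_cons,
        deficiencyFinset_eq_empty (isSimplicial_of_isolated h), Finset.card_empty,
        elimG_eq_self_of_isolated h, zero_add]
    · have hxy : ∀ u, ¬ (elimG G y).Adj x u := by
        rintro u ⟨-, -, -, hxu | ⟨hyx_adj, -⟩⟩
        exacts [h u hxu, h y hyx_adj.symm]
      rw [List.erase_cons_tail (by simpa using hyx), fillList_cons, fillList_cons,
        fillList_erase_of_isolated (elimG G y) L hxy]

omit [Fintype V] in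
lemma IsOrdering.cons_erase {L : List V} (hL : IsOrdering L) (x : V) :
    IsOrdering (x :: L.erase x) := by
  refine ⟨List.nodup_cons.2 ⟨hL.1.not_mem_erase, hL.1.erase x⟩, fun v => ?_⟩
  by_cases hv : v = x
  · exact hv ▸ List.mem_cons_self
  · exact List.mem_cons_of_mem _ ((List.mem_erase_of_ne hv).2 (hL.2 v))

lemma minFillIn_le_fillList (G : SimpleGraph V) {L : List V} (hL : IsOrdering L) :
    minFillIn G ≤ fillList G L :=
  Nat.sInf_le ⟨L, hL, rfl⟩

lemma exists_fillList_eq_minFillIn (G : SimpleGraph V) :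
    ∃ L : List V, IsOrdering L ∧ fillList G L = minFillIn G :=
  Nat.sInf_mem (s := {n | ∃ L : List V, IsOrdering L ∧ fillList G L = n})
    ⟨_, Finset.univ.toList, ⟨Finset.nodup_toList _, fun v => by simp⟩, rfl⟩

/-- if `x` is simplicial in `G`, then `Φ(G) = Φ(G_x)`; equivalently,
eliminating `x` first extends to a minimum fill-in ordering of `G`. -/
theorem stmt_0 (G : SimpleGraph V) (x : V) (hx : IsSimplicial G x) :
    minFillIn G = minFillIn (elimG G x) ∧
    ∃ L : List V, IsOrdering (x :: L) ∧ fillList G (x :: L) = minFillIn G := by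
  obtain ⟨L, hL, hLmin⟩ := exists_fillList_eq_minFillIn (elimG G x)
  have hfill : fillList G (x :: L.erase x) = minFillIn (elimG G x) := by
    rw [fillList_cons, deficiencyFinset_eq_empty hx, Finset.card_empty, zero_add,
      fillList_erase_of_isolated _ _ (not_elimG_adj_self G x), hLmin]
  have hle : minFillIn (elimG G x) ≤ minFillIn G := by
    obtain ⟨M, hM, hMmin⟩ := exists_fillList_eq_minFillIn G
    calc minFillIn (elimG G x) ≤ fillList (elimG G x) M := minFillIn_le_fillList _ hM
      _ ≤ fillList G M := fillList_elimG_le_of_isSimplicial G hx M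
      _ = minFillIn G := hMmin
  have heq : minFillIn G = minFillIn (elimG G x) :=
    le_antisymm (hfill ▸ minFillIn_le_fillList G (hL.cons_erase x)) hle
  exact ⟨heq, L.erase x, hL.cons_erase x, hfill.trans heq.symm⟩
end

section
/- Let G be a graph with a separation clique S (a clique whose removal disconnects G) with connected components C_1,…,C_k of G − S. Then any minimum triangulation T of G contains only edges whose endpoints both lie in the same component C_j, or edges joining a vertex of some C_j to a vertex of S. In particular no edge of T joins two different components, and no edge of T joins two vertices of S. -/
open SimpleGraph

attribute [local instance] Classical.propDecidable

variable {V : Type*} [Fintype V] [DecidableEq V]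

/-
Let `T` be a triangulation and `T'` the edges of `T` that do not join two different
components of `G - S`. On a chordless cycle of `G ∪ T'` the vertices of the clique `S` are
at most two consecutive ones, so the rest of the cycle is a path of `G ∪ T'` avoiding `S`,
and all its vertices lie in one component of `G - S`. Hence no edge of `T` between vertices
of the cycle was discarded, and the cycle is chordless in `G ∪ T` as well. So `T'` is a
triangulation, and if `T` is minimum then `T' = T`. Edges inside `S` are already in `G`.
-/

theorem ZMod.natCast_eq_natCast_iff_of_lt {n a b : ℕ} (ha : a < n) (hb : b < n) :
    (a : ZMod n) = b ↔ a = b := by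
  rw [ZMod.natCast_eq_natCast_iff', Nat.mod_eq_of_lt ha, Nat.mod_eq_of_lt hb]

theorem ZMod.exists_forall_eq_or_eq_add_one {n : ℕ} (hn : 4 ≤ n) (P : ZMod n → Prop)
    (hP : ∀ a c, P a → P c → a = c ∨ c = a + 1 ∨ a = c + 1) :
    ∃ b, ∀ c, P c → c = b ∨ c = b + 1 := by
  have ne_zero : ∀ k : ℕ, 0 < k → k < n → (k : ZMod n) ≠ 0 := fun k hk hkn h =>
    hk.ne' ((ZMod.natCast_eq_natCast_iff_of_lt hkn (by omega)).mp (by simpa using h))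
  by_cases hex : ∃ a, P a
  swap
  · exact ⟨0, fun c hc => (hex ⟨c, hc⟩).elim⟩
  obtain ⟨a, ha⟩ := hex
  by_cases hpred : P (a - 1)
  · refine ⟨a - 1, fun c hc => ?_⟩
    rcases hP a c ha hc with rfl | rfl | rfl
    · exact Or.inr (by ring)
    · -- `a - 1` and `a + 1` are not consecutive as `n ≥ 4`
      exfalso
      rcases hP _ _ hpred hc with h | h | h
      · exact ne_zero 2 (by omega) (by omega) (by push_cast; linear_combination -h)
      · exact ne_zero 1 (by omega) (by omega) (by push_cast; linear_combination h)
      · exact ne_zero 3 (by omega) (by omega) (by push_cast; linear_combination -h)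
    · exact Or.inl (by ring)
  · refine ⟨a, fun c hc => ?_⟩
    rcases hP a c ha hc with h | h | rfl
    · exact Or.inl h.symm
    · exact Or.inr h
    · exact (hpred (by simpa using hc)).elim

theorem SimpleGraph.reachable_of_reachable_succ {W : Type*} (H : SimpleGraph W) (g : ℕ → W)
    {a c : ℕ} (hac : a ≤ c) (hstep : ∀ m, a ≤ m → m < c → H.Reachable (g m) (g (m + 1))) :
    H.Reachable (g a) (g c) := by
  induction c, hac using Nat.le_induction with
  | base => rfl
  | succ c hac ih =>
    exact (ih fun m ham hmc => hstep m ham (by omega)).trans (hstep c hac (by omega))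

/-- Removing at most two consecutive vertices `f b, f (b + 1)` from a cycle leaves a path. -/
theorem SimpleGraph.reachable_of_cycle_of_forall_eq_or_eq_add_one {W : Type*}
    (H : SimpleGraph W) (S : Set W) {n : ℕ} (hn : 3 ≤ n) (f : ZMod n → W) (b : ZMod n)
    (hb : ∀ c, f c ∈ S → c = b ∨ c = b + 1)
    (hstep : ∀ i, f i ∉ S → f (i + 1) ∉ S → H.Reachable (f i) (f (i + 1)))
    {i j : ZMod n} (hi : f i ∉ S) (hj : f j ∉ S) : H.Reachable (f i) (f j) := by
  have : NeZero n := ⟨by omega⟩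
  have notMem : ∀ k : ℕ, 2 ≤ k → k < n → f (b + k) ∉ S := fun k hk hkn hS => by
    rcases hb _ hS with h | h
    · have := (ZMod.natCast_eq_natCast_iff_of_lt (b := 0) hkn (by omega)).mp (by simpa using h)
      omega
    · have := (ZMod.natCast_eq_natCast_iff_of_lt (b := 1) hkn (by omega)).mp (by simpa using h)
      omega
  have path : ∀ k : ℕ, 2 ≤ k → k < n → H.Reachable (f (b + 2)) (f (b + k)) := fun k hk hkn => by
    simpa using H.reachable_of_reachable_succ (fun m => f (b + m)) hk fun m hm hmk => by
      have hsucc := notMem (m + 1) (by omega) (by omega)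
      simpa [add_assoc] using
        hstep (b + m) (notMem m hm (by omega)) (by simpa [add_assoc] using hsucc)
  -- `f b` is one step past the end `f (b + (n - 1))` of `path`,
  -- and `f (b + 1)` one step before its start
  suffices base : ∀ j, f j ∉ S → H.Reachable (f (b + 2)) (f j) from
    (base i hi).symm.trans (base j hj)
  intro j hj
  obtain ⟨k, hkn, rfl⟩ : ∃ k < n, j = b + k :=
    ⟨(j - b).val, ZMod.val_lt _, by rw [ZMod.natCast_zmod_val]; ring⟩
  match k, hkn with
  | 0, _ =>
    have hlast : b + (n - 1 : ℕ) + 1 = b + (0 : ℕ) := by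
      rw [add_assoc, ← Nat.cast_add_one, Nat.sub_add_cancel (by omega), ZMod.natCast_self,
        Nat.cast_zero]
    have hlastS := notMem (n - 1) (by omega) (by omega)
    exact (path (n - 1) (by omega) (by omega)).trans
      (hlast ▸ hstep _ hlastS (by rwa [hlast]))
  | 1, _ =>
    have h2 : b + (1 : ℕ) + 1 = b + 2 := by push_cast; ring
    exact (h2 ▸ hstep _ hj (by rw [h2]; simpa using notMem 2 le_rfl (by omega))).symm
  | k + 2, hkn => exact path (k + 2) (by omega) hkn

theorem SimpleGraph.sup_fromEdgeSet_filter_adj_iff {W : Type*} (G : SimpleGraph W)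
    (T : Finset (Sym2 W)) (p : Sym2 W → Prop) [DecidablePred p] {u v : W} (h : p s(u, v)) :
    (G ⊔ fromEdgeSet ↑(T.filter p)).Adj u v ↔ (G ⊔ fromEdgeSet ↑T).Adj u v := by
  simp [h]

section Noncrossing

variable {W : Type*} {G : SimpleGraph W} {S : Set W} {T : Finset (Sym2 W)}

def IsNoncrossing (G : SimpleGraph W) (S : Set W) (e : Sym2 W) : Prop :=
  ∀ u v, e = s(u, v) → u ∉ S → v ∉ S → (deleteSet G S).Reachable u v

theorem isNoncrossing_mk {u v : W} :
    IsNoncrossing G S s(u, v) ↔ (u ∉ S → v ∉ S → (deleteSet G S).Reachable u v) := by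
  refine ⟨fun h => h u v rfl, fun h x y hxy hx hy => ?_⟩
  rcases Sym2.eq_iff.mp hxy with ⟨rfl, rfl⟩ | ⟨rfl, rfl⟩
  · exact h hx hy
  · exact (h hy hx).symm

theorem reachable_of_adj_sup_filter_isNoncrossing {u v : W}
    (hu : u ∉ S) (hv : v ∉ S) (h : (G ⊔ fromEdgeSet ↑(T.filter (IsNoncrossing G S))).Adj u v) :
    (deleteSet G S).Reachable u v := by
  rcases h with hG | hT
  · exact Adj.reachable ⟨hG, hu, hv⟩
  · exact isNoncrossing_mk.mp (Finset.mem_filter.mp hT.1).2 hu hv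

theorem IsTriangulation.filter_isNoncrossing (hclique : G.IsClique S) (hT : IsTriangulation G T) :
    IsTriangulation G (T.filter (IsNoncrossing G S)) := by
  refine ⟨fun e he => hT.1 e (Finset.mem_filter.mp he).1, fun n hn f hf hcycle => ?_⟩
  have hS : ∀ a c, f a ∈ S → f c ∈ S → a = c ∨ c = a + 1 ∨ a = c + 1 := fun a c ha hc => by
    by_cases hac : a = c
    · exact Or.inl hac
    · exact Or.inr ((hcycle a c).mp (Or.inl (hclique ha hc (hf.ne hac))))
  obtain ⟨b, hb⟩ := ZMod.exists_forall_eq_or_eq_add_one hn (fun c => f c ∈ S) hS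
  have hreach : ∀ i j, f i ∉ S → f j ∉ S → (deleteSet G S).Reachable (f i) (f j) :=
    fun i j hi hj => (deleteSet G S).reachable_of_cycle_of_forall_eq_or_eq_add_one S (by omega)
      f b hb (fun k hk hk1 => reachable_of_adj_sup_filter_isNoncrossing hk hk1
        ((hcycle k (k + 1)).mpr (Or.inl rfl))) hi hj
  refine hT.2 n hn f hf fun i j => ?_
  rw [← hcycle i j, sup_fromEdgeSet_filter_adj_iff _ _ _ (isNoncrossing_mk.mpr (hreach i j))]

theorem IsMinTriangulation.isNoncrossing (hclique : G.IsClique S) (hT : IsMinTriangulation G T)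
    {e : Sym2 W} (he : e ∈ T) : IsNoncrossing G S e := by
  have hfilter : T.filter (IsNoncrossing G S) = T :=
    Finset.eq_of_subset_of_card_le (Finset.filter_subset _ _)
      (hT.2 _ (hT.1.filter_isNoncrossing hclique))
  exact (Finset.mem_filter.mp (hfilter ▸ he)).2

end Noncrossing

theorem stmt_9_general (G : SimpleGraph V) (S : Set V) (T : Finset (Sym2 V))
    (hclique : G.IsClique S)
    (hT : IsMinTriangulation G T) :
    ∀ u v : V, s(u, v) ∈ T →
      ¬ (u ∈ S ∧ v ∈ S) ∧ (u ∉ S → v ∉ S → (deleteSet G S).Reachable u v) := by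
  intro u v huv
  obtain ⟨hdiag, hnonedge⟩ := hT.1.1 _ huv
  refine ⟨fun ⟨hu, hv⟩ => hnonedge (hclique hu hv fun h => hdiag (Sym2.mk_isDiag_iff.mpr h)), ?_⟩
  exact isNoncrossing_mk.mp (hT.isNoncrossing hclique huv)

/-- if `S` is a separation clique of `G`, then every edge of a minimum
triangulation `T` either has both endpoints in the same component of `G - S`, or
joins a component vertex to a vertex of `S`; in particular no edge of `T` joins two
different components and no edge of `T` joins two vertices of `S`. -/
theorem stmt_9 (G : SimpleGraph V) (S : Set V) (T : Finset (Sym2 V))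
    (hclique : G.IsClique S)
    (hdisc : ∃ u v : V, u ∉ S ∧ v ∉ S ∧ ¬ (deleteSet G S).Reachable u v)
    (hT : IsMinTriangulation G T) :
    ∀ u v : V, s(u, v) ∈ T →
      ¬ (u ∈ S ∧ v ∈ S) ∧ (u ∉ S → v ∉ S → (deleteSet G S).Reachable u v) :=
  stmt_9_general G S T hclique hT
end

section
/- Let G be a graph with a vertex a of degree 2 whose two neighbors x, y are non-adjacent, and suppose {a} is not a separator of G. Then there exists a minimum triangulation T of G containing the edge {x,y} and containing no edge incident to a. -/
open SimpleGraph

attribute [local instance] Classical.propDecidable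

variable {V : Type*} [Fintype V] [DecidableEq V]

/-!
Take a minimum triangulation `T'` of `G`, with chordal completion `H' = G ⊔ T'`. Contracting
`a` into `x` keeps `H'` chordal; putting back `a` with its two edges `ax`, `ay` keeps it chordal
too, since `xy` is now an edge and so `a` is simplicial. The fill edges `T` of the resulting
graph contain `xy` and avoid `a`, and each of them other than `xy` is the image of an edge of
`T'` under the contraction. If `xy ∈ T'` this already gives `|T| ≤ |T'|`. Otherwise, as `a` is
not a cut vertex, `x` and `y` are joined in `H' - a`, and chordality of `H'` yields a common
neighbour `z` of `a` and `x`. The fill edge `az` is sent to `xz`, which is an edge of `G` or the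
image of the fill edge `xz` itself; so one edge of `T'` is wasted, and it pays for `xy`.
-/

section InducedCycles

omit [Fintype V] [DecidableEq V]

variable {K : SimpleGraph V} {n : ℕ}

def IsInducedCycle (K : SimpleGraph V) (f : ZMod n → V) : Prop :=
  Function.Injective f ∧ ∀ i j, K.Adj (f i) (f j) ↔ (j = i + 1 ∨ i = j + 1)

/-- The same notion indexed by `ℕ`, where all index arithmetic is linear and left to `omega`. -/
def IsInducedCycleOn (K : SimpleGraph V) (n : ℕ) (g : ℕ → V) : Prop :=
  Set.InjOn g (Set.Iio n) ∧
    ∀ i j, i < j → j < n → (K.Adj (g i) (g j) ↔ j = i + 1 ∨ (i = 0 ∧ j + 1 = n))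

theorem ZMod.natCast_eq_natCast_add_one_iff {i j : ℕ} (hi : i < n) (hj : j < n) :
    (j : ZMod n) = i + 1 ↔ j = i + 1 ∨ (i + 1 = n ∧ j = 0) := by
  rw [← Nat.cast_succ, ZMod.natCast_eq_natCast_iff', Nat.mod_eq_of_lt hj]
  rcases (Nat.succ_le_of_lt hi).lt_or_eq with h | h
  · rw [Nat.mod_eq_of_lt h]; omega
  · rw [h, Nat.mod_self]; omega

theorem IsInducedCycle.rotate {f : ZMod n → V} (hf : IsInducedCycle K f) (c : ZMod n) :
    IsInducedCycle K (fun i => f (c + i)) :=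
  ⟨hf.1.comp (add_right_injective c), fun i j => by
    rw [hf.2, add_assoc, add_assoc, add_right_inj, add_right_inj]⟩

theorem IsInducedCycle.reflect {f : ZMod n → V} (hf : IsInducedCycle K f) (c : ZMod n) :
    IsInducedCycle K (fun i => f (c - i)) := by
  refine ⟨hf.1.comp sub_right_injective, fun i j => ?_⟩
  rw [hf.2, or_comm]
  refine or_congr ⟨fun h => ?_, fun h => ?_⟩ ⟨fun h => ?_, fun h => ?_⟩ <;> linear_combination h

theorem IsInducedCycle.natCast [NeZero n] {f : ZMod n → V} (hf : IsInducedCycle K f) :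
    IsInducedCycleOn K n (fun k : ℕ => f k) := by
  refine ⟨fun i hi j hj h => ?_, fun i j hij hj => ?_⟩
  · have := congrArg ZMod.val (hf.1 h)
    rwa [ZMod.val_natCast, ZMod.val_natCast, Nat.mod_eq_of_lt hi, Nat.mod_eq_of_lt hj] at this
  · rw [hf.2, ZMod.natCast_eq_natCast_add_one_iff (hij.trans hj) hj,
      ZMod.natCast_eq_natCast_add_one_iff hj (hij.trans hj)]
    omega

theorem IsChordal.not_isInducedCycleOn (hK : IsChordal K) (hn : 4 ≤ n) {g : ℕ → V} :
    ¬IsInducedCycleOn K n g := fun hg => by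
  have : NeZero n := ⟨by omega⟩
  refine hK n hn (fun k : ZMod n => g k.val)
    (fun i j h => ZMod.val_injective n (hg.1 (ZMod.val_lt i) (ZMod.val_lt j) h)) fun i j => ?_
  obtain ⟨i, hi, rfl⟩ : ∃ i' < n, (i' : ZMod n) = i := ⟨i.val, i.val_lt, ZMod.natCast_zmod_val i⟩
  obtain ⟨j, hj, rfl⟩ : ∃ j' < n, (j' : ZMod n) = j := ⟨j.val, j.val_lt, ZMod.natCast_zmod_val j⟩
  simp only [ZMod.val_natCast, Nat.mod_eq_of_lt hi, Nat.mod_eq_of_lt hj,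
    ZMod.natCast_eq_natCast_add_one_iff hi hj, ZMod.natCast_eq_natCast_add_one_iff hj hi]
  rcases lt_trichotomy i j with h | rfl | h
  · rw [hg.2 i j h hj]; omega
  · exact iff_of_false (K.loopless.irrefl _) (by omega)
  · rw [K.adj_comm, hg.2 j i h hi]; omega

theorem IsInducedCycleOn.not_isSimplicial {g : ℕ → V} (hg : IsInducedCycleOn K n g)
    (hn : 4 ≤ n) : ¬IsSimplicial K (g 1) := by
  intro hs
  have h02 := hs (g 0) (g 2) (K.adj_symm ((hg.2 0 1 (by omega) (by omega)).2 (by omega)))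
    ((hg.2 1 2 (by omega) (by omega)).2 (by omega))
    (fun h => absurd (hg.1 (by simp; omega) (by simp; omega) h) (by omega))
  have := (hg.2 0 2 (by omega) (by omega)).1 h02
  omega

theorem isInducedCycleOn_update_zero {g : ℕ → V} {a : V} (hinj : Set.InjOn g (Set.Iio n))
    (hga : ∀ k, 0 < k → k < n → g k ≠ a)
    (hpath : ∀ i j, 0 < i → i < j → j < n → (K.Adj (g i) (g j) ↔ j = i + 1))
    (hadj : ∀ j, 0 < j → j < n → (K.Adj a (g j) ↔ j = 1 ∨ j = n - 1)) :
    IsInducedCycleOn K n (Function.update g 0 a) := by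
  refine ⟨fun i hi j hj h => ?_, fun i j hij hj => ?_⟩
  · simp only [Set.mem_Iio] at hi hj
    rcases Nat.eq_zero_or_pos i with rfl | hi0 <;> rcases Nat.eq_zero_or_pos j with rfl | hj0
    · rfl
    · rw [Function.update_self, Function.update_of_ne hj0.ne'] at h
      exact absurd h.symm (hga j hj0 hj)
    · rw [Function.update_self, Function.update_of_ne hi0.ne'] at h
      exact absurd h (hga i hi0 hi)
    · rw [Function.update_of_ne hi0.ne', Function.update_of_ne hj0.ne'] at h
      exact hinj hi hj h
  · rw [Function.update_of_ne (by omega : j ≠ 0)]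
    rcases Nat.eq_zero_or_pos i with rfl | hi0
    · rw [Function.update_self, hadj j hij hj]; omega
    · rw [Function.update_of_ne hi0.ne', hpath i j hi0 hij hj]; omega

theorem isInducedCycleOn_insert {g : ℕ → V} {a x : V} (hinj : Set.InjOn g (Set.Iio n))
    (hxa : x ≠ a) (hgx : ∀ k, 0 < k → k < n → g k ≠ x) (hga : ∀ k, 0 < k → k < n → g k ≠ a)
    (hpath : ∀ i j, 0 < i → i < j → j < n → (K.Adj (g i) (g j) ↔ j = i + 1))
    (hadj : K.Adj x a) (hxg : ∀ j, 0 < j → j < n → (K.Adj x (g j) ↔ j = n - 1))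
    (hag : ∀ j, 0 < j → j < n → (K.Adj a (g j) ↔ j = 1)) :
    IsInducedCycleOn K (n + 1) (fun k => if k = 0 then x else if k = 1 then a else g (k - 1)) := by
  refine ⟨fun i hi j hj h => ?_, fun i j hij hj => ?_⟩
  · simp only [Set.mem_Iio] at hi hj h
    split_ifs at h <;> first
      | omega
      | exact absurd h hxa | exact absurd h.symm hxa
      | exact absurd h (hgx _ (by omega) (by omega))
      | exact absurd h.symm (hgx _ (by omega) (by omega))
      | exact absurd h (hga _ (by omega) (by omega))
      | exact absurd h.symm (hga _ (by omega) (by omega))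
      | have := hinj (by simp; omega) (by simp; omega) h; omega
  · simp only
    split_ifs
    · omega
    · exact iff_of_true hadj (by omega)
    · rw [hxg (j - 1) (by omega) (by omega)]; omega
    · omega
    · omega
    · rw [hag (j - 1) (by omega) (by omega)]; omega
    · omega
    · omega
    · rw [hpath (i - 1) (j - 1) (by omega) (by omega) (by omega)]; omega

theorem isChordal_top : IsChordal (⊤ : SimpleGraph V) := by
  intro n hn f hinj hcyc
  have : NeZero n := ⟨by omega⟩
  exact (IsInducedCycle.natCast ⟨hinj, hcyc⟩).not_isSimplicial hn fun _ _ _ _ h => h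

theorem IsChordal.of_isSimplicial {a : V} (hs : IsSimplicial K a)
    (hK : IsChordal (deleteSet K {a})) : IsChordal K := by
  intro n hn f hinj hcyc
  have : NeZero n := ⟨by omega⟩
  by_cases ha : ∃ i, f i = a
  · obtain ⟨i, hi⟩ := ha
    exact ((IsInducedCycle.rotate ⟨hinj, hcyc⟩ (i - 1)).natCast).not_isSimplicial hn
      (by simpa [hi] using hs)
  · refine hK n hn f hinj fun i j => ?_
    rw [not_exists] at ha
    simp [deleteSet, ha, hcyc]

end InducedCycles

section Contraction

omit [Fintype V] [DecidableEq V]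

variable {K : SimpleGraph V} {a x : V} {n : ℕ}

def contract (K : SimpleGraph V) (a x : V) : SimpleGraph V where
  Adj u v := u ≠ v ∧ u ≠ a ∧ v ≠ a ∧
    (K.Adj u v ∨ (u = x ∧ K.Adj a v) ∨ (v = x ∧ K.Adj a u))
  symm := ⟨fun _ _ ⟨h, hu, hv, h'⟩ => ⟨h.symm, hv, hu, by tauto⟩⟩
  loopless := ⟨fun _ h => h.1 rfl⟩

theorem contract_adj_iff_of_ne {u v : V} (hux : u ≠ x) (hvx : v ≠ x) (hua : u ≠ a)
    (hva : v ≠ a) : (contract K a x).Adj u v ↔ K.Adj u v := by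
  refine ⟨?_, fun h => ⟨h.ne, hua, hva, Or.inl h⟩⟩
  rintro ⟨-, -, -, h | ⟨h, -⟩ | ⟨h, -⟩⟩
  exacts [h, absurd h hux, absurd h hvx]

theorem contract_adj_left_iff {v : V} (hxa : x ≠ a) (hvx : v ≠ x) (hva : v ≠ a) :
    (contract K a x).Adj x v ↔ K.Adj x v ∨ K.Adj a v := by
  refine ⟨?_, fun h => ⟨hvx.symm, hxa, hva, by tauto⟩⟩
  rintro ⟨-, -, -, h | ⟨-, h⟩ | ⟨h, -⟩⟩
  exacts [Or.inl h, Or.inr h, absurd h hvx]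

theorem IsInducedCycle.of_contract {f : ZMod n → V} (hf : IsInducedCycle (contract K a x) f)
    (hx : ∀ i, f i = x → K.Adj x (f (i + 1)) ∧ K.Adj x (f (i - 1))) : IsInducedCycle K f := by
  refine ⟨hf.1, fun i j => ?_⟩
  rw [← hf.2]
  have ha : ∀ k, f k ≠ a := fun k => ((hf.2 k (k + 1)).2 (Or.inl rfl)).2.1
  refine ⟨fun h => ⟨h.ne, ha i, ha j, Or.inl h⟩, fun hM => ?_⟩
  have hij : j = i + 1 ∨ j = i - 1 := ((hf.2 i j).1 hM).imp_right fun h => by rw [h]; ring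
  have hji : i = j + 1 ∨ i = j - 1 := by rcases hij with rfl | rfl <;> simp
  obtain ⟨-, -, -, h | ⟨hi, -⟩ | ⟨hj, -⟩⟩ := hM
  · exact h
  · rw [hi]; rcases hij with rfl | rfl
    exacts [(hx i hi).1, (hx i hi).2]
  · rw [hj, K.adj_comm]; rcases hji with rfl | rfl
    exacts [(hx j hj).1, (hx j hj).2]

/-- Otherwise either `a` can take the place of `x` in the cycle, or `a` can be inserted between
`x` and `g 1`; both give a chordless cycle of `K`. -/
theorem IsChordal.adj_of_isInducedCycleOn_contract (hK : IsChordal K) (hax : K.Adj a x)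
    (hn : 4 ≤ n) {g : ℕ → V} (hg : IsInducedCycleOn (contract K a x) n g) (h0 : g 0 = x) :
    K.Adj x (g 1) := by
  by_contra hx1
  have hga : ∀ k < n, g k ≠ a := fun k hk => by
    rcases Nat.lt_or_ge (k + 1) n with h | h
    · exact ((hg.2 k (k + 1) (by omega) h).2 (Or.inl rfl)).2.1
    · exact ((hg.2 0 k (by omega) hk).2 (Or.inr ⟨rfl, by omega⟩)).2.2.1
  have hxa : x ≠ a := h0 ▸ hga 0 (by omega)
  have hgx : ∀ k, 0 < k → k < n → g k ≠ x := fun k hk hkn h => by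
    have := hg.1 (Set.mem_Iio.2 hkn) (Set.mem_Iio.2 (by omega : 0 < n)) (h.trans h0.symm)
    omega
  have hpath : ∀ i j, 0 < i → i < j → j < n → (K.Adj (g i) (g j) ↔ j = i + 1) := by
    intro i j hi hij hj
    rw [← contract_adj_iff_of_ne (hgx i hi (by omega)) (hgx j (by omega) hj) (hga i (by omega))
      (hga j hj), hg.2 i j hij hj]
    omega
  have hxg : ∀ j, 0 < j → j < n → (K.Adj x (g j) ∨ K.Adj a (g j) ↔ j = 1 ∨ j = n - 1) := by
    intro j hj hjn
    have h0j := hg.2 0 j hj hjn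
    rw [h0] at h0j
    rw [← contract_adj_left_iff hxa (hgx j hj hjn) (hga j hjn), h0j]
    omega
  have ha1 : K.Adj a (g 1) := ((hxg 1 (by omega) (by omega)).2 (Or.inl rfl)).resolve_left hx1
  by_cases han : K.Adj a (g (n - 1))
  · refine hK.not_isInducedCycleOn hn (isInducedCycleOn_update_zero hg.1
      (fun k hk hkn => hga k hkn) hpath fun j hj hjn => ⟨fun h => (hxg j hj hjn).1 (Or.inr h), ?_⟩)
    rintro (rfl | rfl)
    exacts [ha1, han]
  · have hxn : K.Adj x (g (n - 1)) :=
      ((hxg (n - 1) (by omega) (by omega)).2 (Or.inr rfl)).resolve_right han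
    refine hK.not_isInducedCycleOn (show 4 ≤ n + 1 by omega) (isInducedCycleOn_insert hg.1 hxa hgx
      (fun k hk hkn => hga k hkn) hpath hax.symm (fun j hj hjn => ⟨fun h => ?_, ?_⟩)
      (fun j hj hjn => ⟨fun h => ?_, ?_⟩))
    · rcases (hxg j hj hjn).1 (Or.inl h) with rfl | h'
      exacts [absurd h hx1, h']
    · rintro rfl; exact hxn
    · rcases (hxg j hj hjn).1 (Or.inr h) with h' | rfl
      exacts [h', absurd h han]
    · rintro rfl; exact ha1

theorem isChordal_contract (hK : IsChordal K) (hax : K.Adj a x) : IsChordal (contract K a x) := by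
  intro n hn f hinj hcyc
  have : NeZero n := ⟨by omega⟩
  have hf : IsInducedCycle (contract K a x) f := ⟨hinj, hcyc⟩
  refine hK n hn f hinj (hf.of_contract fun i hi => ⟨?_, ?_⟩).2
  · simpa using hK.adj_of_isInducedCycleOn_contract hax hn (hf.rotate i).natCast (by simpa)
  · simpa using hK.adj_of_isInducedCycleOn_contract hax hn (hf.reflect i).natCast (by simpa)

end Contraction

section CommonNeighbour

omit [Fintype V] [DecidableEq V]

theorem SimpleGraph.Walk.not_adj_getVert_of_length_eq_dist {G : SimpleGraph V} {u v : V}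
    {p : G.Walk u v} (hp : p.length = G.dist u v) {i j : ℕ} (hij : i + 2 ≤ j)
    (hj : j ≤ p.length) : ¬G.Adj (p.getVert i) (p.getVert j) := fun h => by
  have := G.dist_le ((p.take i).append (.cons h (p.drop j)))
  simp only [length_append, take_length, length_cons, drop_length] at this
  omega

theorem deleteSet_mono {G K : SimpleGraph V} (h : G ≤ K) (S : Set V) :
    deleteSet G S ≤ deleteSet K S :=
  fun _ _ huv => ⟨h huv.1, huv.2⟩

/-- Follow a shortest `x`–`y` path avoiding `a` up to its first vertex adjacent to `a`: unless
that vertex is the second one, the path together with `a` is a chordless cycle. -/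
theorem IsChordal.exists_adj_adj {K : SimpleGraph V} (hK : IsChordal K) {a x y : V}
    (hax : K.Adj a x) (hay : K.Adj a y) (hxy : x ≠ y) (hnxy : ¬K.Adj x y)
    (hreach : (deleteSet K {a}).Reachable x y) : ∃ z, K.Adj a z ∧ K.Adj x z := by
  obtain ⟨p, hp⟩ := hreach.exists_walk_length_eq_dist
  have hstep : ∀ i < p.length,
      K.Adj (p.getVert i) (p.getVert (i + 1)) ∧ p.getVert i ≠ a ∧ p.getVert (i + 1) ≠ a :=
    fun i hi => p.adj_getVert_succ hi
  have hne : ∀ i ≤ p.length, p.getVert i ≠ a := fun i hi => by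
    rcases hi.lt_or_eq with hi | rfl
    exacts [(hstep i hi).2.1, by simpa using hay.ne']
  have hlen : 2 ≤ p.length := by
    by_contra! h
    obtain h | h : p.length = 0 ∨ p.length = 1 := by omega
    · exact hxy (p.eq_of_length_eq_zero h)
    · exact hnxy (p.adj_of_length_eq_one h).1
  have hex : ∃ m, 0 < m ∧ K.Adj a (p.getVert m) := ⟨p.length, by omega, by simpa using hay⟩
  obtain ⟨hm0, hma⟩ := Nat.find_spec hex
  have hmin : ∀ i, 0 < i → i < Nat.find hex → ¬K.Adj a (p.getVert i) :=
    fun i hi him h => Nat.find_min hex him ⟨hi, h⟩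
  have hml : Nat.find hex ≤ p.length := Nat.find_min' hex ⟨by omega, by simpa using hay⟩
  generalize Nat.find hex = m at hm0 hma hmin hml
  rcases (Nat.succ_le_of_lt hm0).eq_or_lt with rfl | hm1
  · exact ⟨p.getVert 1, hma, by simpa using (hstep 0 (by omega)).1⟩
  refine (hK.not_isInducedCycleOn (show 4 ≤ m + 2 by omega)
    (g := fun k => if k ≤ m then p.getVert k else a) ⟨?_, fun i j hij hj => ?_⟩).elim
  · intro i hi j hj h
    simp only [Set.mem_Iio] at hi hj h
    have hinj := (p.isPath_of_length_eq_dist hp).getVert_injOn (x₁ := i) (x₂ := j)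
    split_ifs at h
    · exact hinj (by simp; omega) (by simp; omega) h
    · exact absurd h (hne i (by omega))
    · exact absurd h.symm (hne j (by omega))
    · omega
  · simp only [if_pos (by omega : i ≤ m)]
    rcases Nat.lt_or_ge j (m + 1) with hjm | hjm
    · rw [if_pos (by omega)]
      refine ⟨fun h => ?_, ?_⟩
      · by_contra
        exact p.not_adj_getVert_of_length_eq_dist hp (by omega) (by omega)
          ⟨h, hne i (by omega), hne j (by omega)⟩
      · rintro (rfl | ⟨-, h⟩)
        exacts [(hstep i (by omega)).1, by omega]
    · rw [if_neg (by omega), K.adj_comm]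
      refine ⟨fun h => ?_, ?_⟩
      · by_contra
        exact hmin i (by omega) (by omega) h
      · rintro (h | ⟨rfl, -⟩)
        · rwa [show i = m by omega]
        · simpa using hax

end CommonNeighbour

theorem Finset.card_le_card_of_subset_insert_image {α β : Type*} [DecidableEq α] [DecidableEq β]
    {s : Finset β} {t : Finset α} {f : α → β} {b : β} (h : s ⊆ insert b (t.image f)) {d : α}
    (hd : d ∈ t) (hfd : f d ∈ s → f d = b ∨ f d ∈ (t.erase d).image f) : s.card ≤ t.card := by
  have hs : s ⊆ insert b ((t.erase d).image f) := by
    intro e he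
    rcases mem_insert.1 (h he) with rfl | he'
    · exact mem_insert_self _ _
    obtain ⟨c, hc, rfl⟩ := mem_image.1 he'
    by_cases hcd : c = d
    · subst hcd
      exact mem_insert.2 (hfd he)
    · exact mem_insert_of_mem (mem_image_of_mem f (mem_erase.2 ⟨hcd, hc⟩))
  calc s.card ≤ (insert b ((t.erase d).image f)).card := card_le_card hs
    _ ≤ ((t.erase d).image f).card + 1 := card_insert_le _ _
    _ ≤ (t.erase d).card + 1 := Nat.add_le_add_right card_image_le 1
    _ = t.card := card_erase_add_one hd

omit [Fintype V] in
theorem isTriangulation_edgeFinset_sdiff {G H : SimpleGraph V} [Fintype G.edgeSet]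
    [Fintype H.edgeSet] (hGH : G ≤ H) (hH : IsChordal H) :
    IsTriangulation G (H.edgeFinset \ G.edgeFinset) := by
  refine ⟨fun e he => ?_, ?_⟩
  · rw [Finset.mem_sdiff, mem_edgeFinset, mem_edgeFinset] at he
    exact ⟨not_isDiag_of_mem_edgeSet _ he.1, he.2⟩
  · rwa [Finset.coe_sdiff, coe_edgeFinset, coe_edgeFinset, ← edgeSet_sdiff, fromEdgeSet_edgeSet,
      sup_sdiff_cancel_right hGH]

theorem exists_isMinTriangulation (G : SimpleGraph V) : ∃ T, IsMinTriangulation G T := by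
  have htop := isTriangulation_edgeFinset_sdiff (G := G) le_top isChordal_top
  obtain ⟨T, hT, hmin⟩ := (Finset.univ.filter (IsTriangulation G)).exists_min_image Finset.card
    ⟨_, Finset.mem_filter.2 ⟨Finset.mem_univ _, htop⟩⟩
  exact ⟨T, (Finset.mem_filter.1 hT).2,
    fun T' hT' => hmin T' (Finset.mem_filter.2 ⟨Finset.mem_univ _, hT'⟩)⟩

section DegreeTwo

variable {G K : SimpleGraph V} {a x y : V}

def contractEdge (a x : V) : Sym2 V → Sym2 V :=
  Sym2.map (Function.update id a x)

omit [Fintype V] in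
theorem contractEdge_mk_of_ne {u v : V} (hu : u ≠ a) (hv : v ≠ a) :
    contractEdge a x s(u, v) = s(u, v) := by
  simp [contractEdge, Function.update_of_ne hu, Function.update_of_ne hv]

omit [Fintype V] in
theorem contractEdge_mk_left {v : V} (hv : v ≠ a) : contractEdge a x s(a, v) = s(x, v) := by
  simp [contractEdge, Function.update_of_ne hv]

omit [Fintype V] [DecidableEq V] in
theorem deleteSet_sup_contract (hGK : G ≤ K) :
    deleteSet (G ⊔ contract K a x) {a} = contract K a x := by
  ext u v
  simp only [deleteSet, sup_adj, Set.mem_singleton_iff]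
  constructor
  · rintro ⟨h | h, hu, hv⟩
    exacts [⟨h.ne, hu, hv, Or.inl (hGK h)⟩, h]
  · exact fun h => ⟨Or.inr h, h.2.1, h.2.2.1⟩

omit [Fintype V] [DecidableEq V] in
theorem IsChordal.sup_contract (hK : IsChordal K) (hGK : G ≤ K)
    (hnbr : ∀ v, G.Adj a v ↔ v = x ∨ v = y) : IsChordal (G ⊔ contract K a x) := by
  have hax : G.Adj a x := (hnbr x).2 (Or.inl rfl)
  have hay : G.Adj a y := (hnbr y).2 (Or.inr rfl)
  refine IsChordal.of_isSimplicial (a := a) (fun b c hb hc hbc => ?_) ?_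
  · have hb' := (hnbr b).1 (hb.resolve_right fun h => h.2.1 rfl)
    have hc' := (hnbr c).1 (hc.resolve_right fun h => h.2.1 rfl)
    right
    rcases hb' with rfl | rfl <;> rcases hc' with rfl | rfl
    · exact absurd rfl hbc
    · exact ⟨hbc, hax.ne', hay.ne', Or.inr (Or.inl ⟨rfl, hGK hay⟩)⟩
    · exact ⟨hbc, hay.ne', hax.ne', Or.inr (Or.inr ⟨rfl, hGK hay⟩)⟩
    · exact absurd rfl hbc
  · rw [deleteSet_sup_contract hGK]
    exact isChordal_contract hK (hGK hax)

theorem edgeFinset_sup_contract_sdiff_subset (hnbr : ∀ v, G.Adj a v ↔ v = x ∨ v = y)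
    (T : Finset (Sym2 V)) :
    (G ⊔ contract (G ⊔ fromEdgeSet ↑T) a x).edgeFinset \ G.edgeFinset ⊆
      insert s(x, y) (T.image (contractEdge a x)) := by
  have hmoved : ∀ v, v ≠ a → x ≠ v → (G ⊔ fromEdgeSet ↑T).Adj a v →
      s(x, v) ∈ insert s(x, y) (T.image (contractEdge a x)) := by
    intro v hva hxv hav
    rcases hav with hG | ⟨hT, -⟩
    · rcases (hnbr v).1 hG with rfl | rfl
      exacts [absurd rfl hxv, Finset.mem_insert_self _ _]
    · exact Finset.mem_insert_of_mem (Finset.mem_image.2 ⟨_, hT, contractEdge_mk_left hva⟩)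
  intro e he
  induction e using Sym2.ind with | _ u v => ?_
  simp only [Finset.mem_sdiff, mem_edgeFinset, mem_edgeSet, sup_adj] at he
  obtain ⟨hG | ⟨huv, hua, hva, hK | ⟨hux, h⟩ | ⟨hvx, h⟩⟩, hnG⟩ := he
  · exact absurd hG hnG
  · rcases hK with hG | ⟨hT, -⟩
    · exact absurd hG hnG
    · exact Finset.mem_insert_of_mem
        (Finset.mem_image.2 ⟨_, hT, contractEdge_mk_of_ne hua hva⟩)
  · rw [hux] at huv ⊢
    exact hmoved v hva huv h
  · rw [hvx] at huv ⊢
    rw [show s(u, x) = s(x, u) from Sym2.eq_swap]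
    exact hmoved u hua huv.symm h

omit [Fintype V] in
theorem exists_mem_contractEdge_redundant {T : Finset (Sym2 V)} (hT : IsTriangulation G T)
    (hnbr : ∀ v, G.Adj a v ↔ v = x ∨ v = y) (hxy : x ≠ y) (hnadj : ¬G.Adj x y)
    (hreach : (deleteSet G {a}).Reachable x y) :
    ∃ d ∈ T, contractEdge a x d ∉ G.edgeSet →
      contractEdge a x d = s(x, y) ∨ contractEdge a x d ∈ (T.erase d).image (contractEdge a x) := by
  set K := G ⊔ fromEdgeSet ↑T
  have hKadj : ∀ u v, K.Adj u v ↔ G.Adj u v ∨ (s(u, v) ∈ T ∧ u ≠ v) := by simp [K]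
  have hGK : G ≤ K := le_sup_left
  have hax : G.Adj a x := (hnbr x).2 (Or.inl rfl)
  have hay : G.Adj a y := (hnbr y).2 (Or.inr rfl)
  have hxa : x ≠ a := hax.ne'
  have hya : y ≠ a := hay.ne'
  by_cases hxyT : s(x, y) ∈ T
  · exact ⟨_, hxyT, fun _ => Or.inl (contractEdge_mk_of_ne hxa hya)⟩
  have hnK : ¬K.Adj x y := by rw [hKadj]; tauto
  obtain ⟨z, haz, hxz⟩ := hT.2.exists_adj_adj (hGK hax) (hGK hay) hxy hnK
    (hreach.mono (deleteSet_mono hGK _))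
  have hazT : s(a, z) ∈ T := by
    refine (((hKadj a z).1 haz).resolve_left fun h => ?_).1
    rcases (hnbr z).1 h with rfl | rfl
    exacts [hxz.ne rfl, hnK hxz]
  refine ⟨_, hazT, fun hG => Or.inr ?_⟩
  rw [contractEdge_mk_left haz.ne'] at hG ⊢
  have hxzT : s(x, z) ∈ T := (((hKadj x z).1 hxz).resolve_left hG).1
  exact Finset.mem_image.2 ⟨_, Finset.mem_erase.2 ⟨fun h => hxa (Sym2.congr_left.1 h), hxzT⟩,
    contractEdge_mk_of_ne hxa haz.ne'⟩

end DegreeTwo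

/-- if `a` has degree 2 with non-adjacent neighbors `x, y` and `a`
is not a cut vertex, then there is a minimum triangulation containing `{x,y}` and
no edge incident to `a`. -/
theorem stmt_12 (G : SimpleGraph V) (a x y : V)
    (hxy : x ≠ y) (hax : G.Adj a x) (hay : G.Adj a y) (hnadj : ¬ G.Adj x y)
    (hdeg : G.neighborSet a = {x, y})
    (hcut : ¬ ∃ u v : V, u ≠ a ∧ v ≠ a ∧ G.Reachable u v ∧
      ¬ (deleteSet G {a}).Reachable u v) :
    ∃ T : Finset (Sym2 V), IsMinTriangulation G T ∧ s(x, y) ∈ T ∧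
      ∀ z : V, s(a, z) ∉ T := by
  have hnbr : ∀ v, G.Adj a v ↔ v = x ∨ v = y := fun v => by
    rw [← mem_neighborSet, hdeg, Set.mem_insert_iff, Set.mem_singleton_iff]
  have hreach : (deleteSet G {a}).Reachable x y := by
    by_contra h
    exact hcut ⟨x, y, hax.ne', hay.ne', hax.symm.reachable.trans hay.reachable, h⟩
  obtain ⟨T', hT', hmin⟩ := exists_isMinTriangulation G
  obtain ⟨d, hd, hred⟩ := exists_mem_contractEdge_redundant hT' hnbr hxy hnadj hreach
  set H := G ⊔ contract (G ⊔ fromEdgeSet ↑T') a x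
  refine ⟨H.edgeFinset \ G.edgeFinset,
    ⟨isTriangulation_edgeFinset_sdiff le_sup_left (hT'.2.sup_contract le_sup_left hnbr),
      fun T hT => le_trans ?_ (hmin T hT)⟩, ?_, fun z hz => ?_⟩
  · refine Finset.card_le_card_of_subset_insert_image
      (edgeFinset_sup_contract_sdiff_subset hnbr T') hd fun h => hred ?_
    exact fun hG => (Finset.mem_sdiff.1 h).2 (mem_edgeFinset.2 hG)
  · simp only [Finset.mem_sdiff, mem_edgeFinset, mem_edgeSet]
    exact ⟨Or.inr ⟨hxy, hax.ne', hay.ne', Or.inr (Or.inl ⟨rfl, Or.inl hay⟩)⟩, hnadj⟩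
  · simp only [Finset.mem_sdiff, mem_edgeFinset, mem_edgeSet] at hz
    exact hz.2 (hz.1.resolve_right fun h => h.2.1 rfl)
end
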